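/- (Lyusternik–Graves / local surjectivity) Let X, Y be Banach spaces, r > 0, and Λ : B_X(0,r) → Y continuously (Fréchet) differentiable with Λ'(0) : X → Y surjective. Set ξ₀ = Λ(0). Then there exist ε > 0, C > 0 and a map W : B_Y(ξ₀, ε) → X such that for all y ∈ B_Y(ξ₀,ε): W(y) ∈ B_X(0,r), Λ(W(y)) = y, and ‖W(y)‖_X ≤ C ‖y - ξ₀‖_Y. -/

import Mathlib

open Metric
open scoped NNReal

/-- Lyusternik–Graves: local right inverse with linear estimate for a C¹ map whose
derivative at 0 is surjective. -/
theorem stmt_15 {X Y : Type*} [NormedAddCommGroup X] [NormedSpace ℝ X] [CompleteSpace X]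
    [NormedAddCommGroup Y] [NormedSpace ℝ Y] [CompleteSpace Y]
    (r : ℝ) (hr : 0 < r) (Λ : X → Y) (Λ' : X → X →L[ℝ] Y)
    (hdiff : ∀ x ∈ ball (0 : X) r, HasFDerivAt Λ (Λ' x) x)
    (hcont : ContinuousOn Λ' (ball (0 : X) r))
    (hsurj : Function.Surjective (Λ' 0)) :
    ∃ ε > 0, ∃ C > 0, ∃ W : Y → X, ∀ y ∈ ball (Λ 0) ε,
      W y ∈ ball (0 : X) r ∧ Λ (W y) = y ∧ ‖W y‖ ≤ C * ‖y - Λ 0‖ := by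
  have hrange : (Λ' 0).range = ⊤ := (LinearMap.range_eq_top (f := ((Λ' 0 : X →L[ℝ] Y) : X →ₗ[ℝ] Y))).2 hsurj
  set f'symm := (Λ' 0).nonlinearRightInverseOfSurjective hrange with hf'symm
  have f'symm_pos : 0 < f'symm.nnnorm :=
    (Λ' 0).nonlinearRightInverseOfSurjective_nnnorm_pos hrange
  set c : ℝ≥0 := f'symm.nnnorm⁻¹ / 2 with hc
  have cpos : (0 : ℝ) < c := by
    have : (0 : ℝ≥0) < c := by positivity
    exact_mod_cast this
  have hcoe : (c : ℝ) = (f'symm.nnnorm : ℝ)⁻¹ / 2 := by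
    rw [hc]; push_cast; ring
  have hkey : (f'symm.nnnorm : ℝ)⁻¹ - (c : ℝ) = (c : ℝ) := by rw [hcoe]; ring
  -- find δ with ‖Λ' x - Λ' 0‖ ≤ c on ball 0 δ
  have h0r : (0 : X) ∈ ball (0 : X) r := by simpa using hr
  have hcw : ContinuousWithinAt Λ' (ball (0 : X) r) 0 := hcont 0 h0r
  rw [Metric.continuousWithinAt_iff] at hcw
  obtain ⟨δ₀, hδ₀, hδ⟩ := hcw (c : ℝ) cpos
  set δ : ℝ := min δ₀ r with hδdef
  have hδpos : 0 < δ := lt_min hδ₀ hr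
  have hδr : ball (0 : X) δ ⊆ ball (0 : X) r := ball_subset_ball (min_le_right _ _)
  -- ApproximatesLinearOn on ball 0 δ
  have happrox : ApproximatesLinearOn Λ (Λ' 0) (ball (0 : X) δ) c := by
    intro x hx y hy
    refine Convex.norm_image_sub_le_of_norm_hasFDerivWithin_le'
      (f' := Λ') (fun z hz => (hdiff z (hδr hz)).hasFDerivWithinAt)
      (fun z hz => ?_) (convex_ball _ _) hy hx
    have hz' : z ∈ ball (0 : X) r := hδr hz
    have : dist z 0 < δ₀ := lt_of_lt_of_le (mem_ball.1 hz) (min_le_left _ _)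
    have := hδ hz' this
    rw [dist_eq_norm] at this
    exact this.le
  set C : ℝ := (c : ℝ)⁻¹ with hC
  have hCpos : 0 < C := by positivity
  set ε : ℝ := (c : ℝ) * (δ / 2) with hε
  have hεpos : 0 < ε := by positivity
  have key : ∀ y : Y, ∃ x : X, y ∈ ball (Λ 0) ε →
      x ∈ ball (0 : X) r ∧ Λ x = y ∧ ‖x‖ ≤ C * ‖y - Λ 0‖ := by
    intro y
    by_cases hy : y ∈ ball (Λ 0) ε
    · set ρ : ℝ := ‖y - Λ 0‖ / c with hρ
      have hρ0 : 0 ≤ ρ := by positivity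
      have hρlt : ρ < δ / 2 := by
        rw [hρ, div_lt_iff₀ cpos]
        have : dist y (Λ 0) < ε := mem_ball.1 hy
        rw [dist_eq_norm] at this
        rw [hε] at this; linarith [this]
      have hsub : closedBall (0 : X) ρ ⊆ ball (0 : X) δ := by
        intro z hz
        have : ‖z‖ ≤ ρ := by simpa [dist_eq_norm] using hz
        exact mem_ball.2 (by simp [dist_eq_norm]; linarith)
      have hsurjon := happrox.surjOn_closedBall_of_nonlinearRightInverse f'symm hρ0 hsub
      have hymem : y ∈ closedBall (Λ 0) (((f'symm.nnnorm : ℝ)⁻¹ - c) * ρ) := by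
        rw [hkey]
        have : (c : ℝ) * ρ = ‖y - Λ 0‖ := by
          rw [hρ]; field_simp
        rw [mem_closedBall, dist_eq_norm, this]
      obtain ⟨x, hx1, hx2⟩ := hsurjon hymem
      have hxnorm : ‖x‖ ≤ ρ := by simpa [dist_eq_norm] using hx1
      refine ⟨x, fun _ => ⟨hδr (hsub hx1), hx2, ?_⟩⟩
      calc ‖x‖ ≤ ρ := hxnorm
        _ = C * ‖y - Λ 0‖ := by rw [hρ, hC, div_eq_inv_mul]
    · exact ⟨0, fun h => absurd h hy⟩
  choose W hW using key
  exact ⟨ε, hεpos, C, hCpos, W, fun y hy => hW y hy⟩
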